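/- Let B ⊆ F be an additive subgroup of order 4 and let f(t) = f1·t, g(t) = g1·t on B with Tr(f1·g1) = 1, so that (B, f, g) is a linear additive partial flock of K of size 4 whose four planes X0 + f1tX1 + tX2 + g1tX3 = 0 (t ∈ B) share the common line {X0 = 0, f1X1 + X2 + g1X3 = 0}. Let t0 ∈ F \ B and a, b ∈ F satisfy Tr[((f1·s + a)·(g1·s + b))/(s + t0)²] = 1 for all s ∈ B. Then there is a unique additive partial flock of size 8 whose conics include the conic cut by X0 + aX1 + t0X2 + bX3 = 0 and the four conics of (B, f, g), namely the one given by B' = B ∪ (t0 + B), f'(s) = f1s, f'(s + t0) = f1s + a, g'(s) = g1s, g'(s + t0) = g1s + b (s ∈ B). Moreover, if a = f1·t0 and b = g1·t0 (i.e., the new plane contains the common line of the four given planes), then this partial flock of size 8 is linear. -/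
import Mathlib


/-!
STATEMENT 13: Extension of a linear additive partial flock of size 4 (Theorem 7
of the paper).  Let `B` be an additive subgroup of order 4, `f(t) = f1·t`,
`g(t) = g1·t` with `Tr(f1 g1) = 1` (a linear additive partial flock of size 4),
and let `t0 ∉ B`, `a, b ∈ F` satisfy the disjointness trace condition.  Then
there is a unique additive partial flock of size 8 whose conics include the conic
cut by `X0 + aX1 + t0X2 + bX3 = 0` and the four given conics, namely the one
given by `B' = B ∪ (t0 + B)`, `f'(s) = f1 s`, `f'(s + t0) = f1 s + a`,
`g'(s) = g1 s`, `g'(s + t0) = g1 s + b`.  Moreover, if `a = f1·t0` and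
`b = g1·t0` then this partial flock of size 8 is linear (all its planes contain
a common line).
-/

open Projectivization

noncomputable section

abbrev F (h : ℕ) : Type := GaloisField 2 h

/-- The absolute trace map from `GF(2^h)` onto `GF(2)`. -/
def Tr {h : ℕ} (x : F h) : ZMod 2 := Algebra.trace (ZMod 2) (F h) x

/-- Points of the projective space `PG(3, 2^h)`. -/
abbrev Pt3 (h : ℕ) := Projectivization (F h) (Fin 4 → F h)

/-- The plane `aX0 + bX1 + cX2 + dX3 = 0` of `PG(3,q)`. -/
def planeSet {h : ℕ} (a b c d : F h) : Set (Pt3 h) :=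
  {P | a * P.rep 0 + b * P.rep 1 + c * P.rep 2 + d * P.rep 3 = 0}

-- auxiliary lemmas --------------------------------------------------------

lemma F_two_eq_zero (h : ℕ) : (2 : F h) = 0 := CharTwo.two_eq_zero

lemma F_add_self (h : ℕ) (x : F h) : x + x = 0 := CharTwo.add_self_eq_zero x

lemma F_add_eq_zero_iff (h : ℕ) (x y : F h) : x + y = 0 ↔ x = y := by
  rw [CharTwo.add_eq_iff_eq_add, zero_add]

lemma ratio_simp (h : ℕ) (f1 g1 x : F h) (hx : x ≠ 0) :
    (f1 * x) * (g1 * x) / x ^ 2 = f1 * g1 := by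
  field_simp

theorem stmt13 (h : ℕ) (hh : h ≠ 0) (B : AddSubgroup (F h))
    (hB : Nat.card B = 4) (f1 g1 : F h) (htr1 : Tr (f1 * g1) = 1)
    (t0 a b : F h) (ht0 : t0 ∉ B)
    (hnew : ∀ s ∈ B, Tr ((f1 * s + a) * (g1 * s + b) / (s + t0) ^ 2) = 1) :
    ∃ B' : AddSubgroup (F h),
      (B' : Set (F h)) = (B : Set (F h)) ∪ ((fun s => t0 + s) '' (B : Set (F h))) ∧
      Nat.card B' = 8 ∧
      ∃ f' g' : F h → F h,
        (∀ s ∈ B, f' s = f1 * s ∧ f' (s + t0) = f1 * s + a ∧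
            g' s = g1 * s ∧ g' (s + t0) = g1 * s + b) ∧
        -- `(B', f', g')` is an additive partial flock of size 8
        (∀ s ∈ B', ∀ t ∈ B', f' (s + t) = f' s + f' t ∧ g' (s + t) = g' s + g' t) ∧
        (∀ s ∈ B', ∀ t ∈ B', s ≠ t →
            Tr ((f' s + f' t) * (g' s + g' t) / (s + t) ^ 2) = 1) ∧
        -- it is the unique such flock containing the five given conics
        (∀ B'' : AddSubgroup (F h), ∀ f'' g'' : F h → F h,
          Nat.card B'' = 8 →
          (∀ s ∈ B'', ∀ t ∈ B'',
              f'' (s + t) = f'' s + f'' t ∧ g'' (s + t) = g'' s + g'' t) →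
          (∀ s ∈ B'', ∀ t ∈ B'', s ≠ t →
              Tr ((f'' s + f'' t) * (g'' s + g'' t) / (s + t) ^ 2) = 1) →
          (∀ s ∈ B, s ∈ B'' ∧ f'' s = f1 * s ∧ g'' s = g1 * s) →
          (t0 ∈ B'' ∧ f'' t0 = a ∧ g'' t0 = b) →
          B'' = B' ∧ ∀ s ∈ B', f'' s = f' s ∧ g'' s = g' s) ∧
        -- linearity in the special case `a = f1·t0`, `b = g1·t0`
        (a = f1 * t0 ∧ b = g1 * t0 →
          ∃ P Q : Pt3 h, P ≠ Q ∧ ∀ t ∈ B',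
            P ∈ planeSet 1 (f' t) t (g' t) ∧ Q ∈ planeSet 1 (f' t) t (g' t)) := by
  classical
  have h2 : (2 : F h) = 0 := F_two_eq_zero h
  set S : Set (F h) := (B : Set (F h)) ∪ ((fun s => t0 + s) '' (B : Set (F h))) with hS
  have memS : ∀ x, x ∈ S ↔ (x ∈ B ∨ ∃ s ∈ B, t0 + s = x) := by
    intro x
    constructor
    · rintro (hx | ⟨s, hs, rfl⟩)
      · exact Or.inl hx
      · exact Or.inr ⟨s, hs, rfl⟩
    · rintro (hx | ⟨s, hs, rfl⟩)
      · exact Or.inl hx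
      · exact Or.inr ⟨s, hs, rfl⟩
  have hcoset : ∀ s ∈ B, t0 + s ∉ B := by
    intro s hs hmem
    apply ht0
    have : t0 = (t0 + s) + s := by linear_combination -s * h2
    rw [this]; exact add_mem hmem hs
  have hSclosed : ∀ x ∈ S, ∀ y ∈ S, x + y ∈ S := by
    intro x hx y hy
    rw [memS] at hx hy ⊢
    rcases hx with hx | ⟨u, hu, hux⟩ <;> rcases hy with hy | ⟨v, hv, hvy⟩
    · exact Or.inl (add_mem hx hy)
    · refine Or.inr ⟨v + x, add_mem hv hx, ?_⟩
      linear_combination hvy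
    · refine Or.inr ⟨u + y, add_mem hu hy, ?_⟩
      linear_combination hux
    · refine Or.inl ?_
      have : x + y = u + v := by linear_combination -hux - hvy + t0 * h2
      rw [this]; exact add_mem hu hv
  have hnegS : ∀ x, x ∈ S → -x ∈ S := by
    intro x hx
    rwa [CharTwo.neg_eq]
  let B' : AddSubgroup (F h) :=
    { carrier := S
      add_mem' := fun hx hy => hSclosed _ hx _ hy
      zero_mem' := Or.inl (zero_mem B)
      neg_mem' := fun hx => hnegS _ hx }
  have hmemB' : ∀ x : F h, x ∈ B' ↔ x ∈ S := fun x => Iff.rfl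
  -- cardinality of S
  have hBfin : (B : Set (F h)).Finite := by
    have : Finite B := Nat.finite_of_card_ne_zero (by omega)
    exact Set.toFinite _
  have hinj : Function.Injective (fun s : F h => t0 + s) :=
    fun u v huv => by simpa using huv
  have hdisj : Disjoint (B : Set (F h)) ((fun s => t0 + s) '' (B : Set (F h))) := by
    rw [Set.disjoint_left]
    rintro x hx ⟨s, hs, rfl⟩
    exact hcoset s hs hx
  have hcardB : (B : Set (F h)).ncard = 4 := by
    rw [← Nat.card_coe_set_eq]; exact hB
  have hScard : S.ncard = 8 := by
    rw [hS, Set.ncard_union_eq hdisj hBfin (hBfin.image _),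
      Set.ncard_image_of_injective _ hinj, hcardB]
  have hB'card : Nat.card B' = 8 := by
    have : Nat.card B' = Nat.card S :=
      Nat.card_congr (Equiv.subtypeEquivRight fun x => Iff.rfl)
    rw [this, Nat.card_coe_set_eq, hScard]
  refine ⟨B', rfl, hB'card, ?_⟩
  -- the functions
  set f' : F h → F h := fun x => if x ∈ B then f1 * x else f1 * (x + t0) + a with hf'
  set g' : F h → F h := fun x => if x ∈ B then g1 * x else g1 * (x + t0) + b with hg'
  have hf'mem : ∀ x ∈ B, f' x = f1 * x := fun x hx => if_pos hx
  have hg'mem : ∀ x ∈ B, g' x = g1 * x := fun x hx => if_pos hx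
  have hf'nmem : ∀ x ∉ B, f' x = f1 * (x + t0) + a := fun x hx => if_neg hx
  have hg'nmem : ∀ x ∉ B, g' x = g1 * (x + t0) + b := fun x hx => if_neg hx
  have hf'T : ∀ s ∈ B, f' (s + t0) = f1 * s + a := by
    intro s hs
    have hn : s + t0 ∉ B := by rw [add_comm]; exact hcoset s hs
    rw [hf'nmem _ hn]
    linear_combination f1 * t0 * h2
  have hg'T : ∀ s ∈ B, g' (s + t0) = g1 * s + b := by
    intro s hs
    have hn : s + t0 ∉ B := by rw [add_comm]; exact hcoset s hs
    rw [hg'nmem _ hn]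
    linear_combination g1 * t0 * h2
  have hdec : ∀ x ∈ S, x ∈ B ∨ (x ∉ B ∧ x + t0 ∈ B) := by
    intro x hx
    rcases (memS x).1 hx with hx' | ⟨s, hs, rfl⟩
    · exact Or.inl hx'
    · refine Or.inr ⟨hcoset s hs, ?_⟩
      have : t0 + s + t0 = s := by linear_combination t0 * h2
      rw [this]; exact hs
  -- additivity
  have hadd : ∀ x ∈ S, ∀ y ∈ S,
      f' (x + y) = f' x + f' y ∧ g' (x + y) = g' x + g' y := by
    intro x hx y hy
    rcases hdec x hx with hxB | ⟨hxB, hxT⟩ <;> rcases hdec y hy with hyB | ⟨hyB, hyT⟩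
    · have hxy : x + y ∈ B := add_mem hxB hyB
      rw [hf'mem _ hxy, hf'mem _ hxB, hf'mem _ hyB, hg'mem _ hxy, hg'mem _ hxB,
        hg'mem _ hyB]
      exact ⟨by ring, by ring⟩
    · have hxy : x + y ∉ B := by
        intro hmem
        apply hyB
        have : y = x + (x + y) := by linear_combination -x * h2
        rw [this]; exact add_mem hxB hmem
      rw [hf'nmem _ hxy, hf'nmem _ hyB, hf'mem _ hxB, hg'nmem _ hxy, hg'nmem _ hyB,
        hg'mem _ hxB]
      exact ⟨by ring, by ring⟩
    · have hxy : x + y ∉ B := by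
        intro hmem
        apply hxB
        have : x = y + (x + y) := by linear_combination -y * h2
        rw [this]; exact add_mem hyB hmem
      rw [hf'nmem _ hxy, hf'nmem _ hxB, hf'mem _ hyB, hg'nmem _ hxy, hg'nmem _ hxB,
        hg'mem _ hyB]
      exact ⟨by ring, by ring⟩
    · have hxy : x + y ∈ B := by
        have : x + y = (x + t0) + (y + t0) := by linear_combination -t0 * h2
        rw [this]; exact add_mem hxT hyT
      rw [hf'mem _ hxy, hf'nmem _ hxB, hf'nmem _ hyB, hg'mem _ hxy, hg'nmem _ hxB,
        hg'nmem _ hyB]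
      refine ⟨?_, ?_⟩
      · linear_combination (-(f1 * t0) - a) * h2
      · linear_combination (-(g1 * t0) - b) * h2
  have hne0 : ∀ x y : F h, x ≠ y → x + y ≠ 0 := by
    intro x y hxy hc
    exact hxy ((F_add_eq_zero_iff h x y).mp hc)
  -- trace condition
  have htrace : ∀ x ∈ S, ∀ y ∈ S, x ≠ y →
      Tr ((f' x + f' y) * (g' x + g' y) / (x + y) ^ 2) = 1 := by
    intro x hx y hy hxy
    have hxy0 : x + y ≠ 0 := hne0 x y hxy
    rcases hdec x hx with hxB | ⟨hxB, hxT⟩ <;> rcases hdec y hy with hyB | ⟨hyB, hyT⟩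
    · rw [hf'mem _ hxB, hf'mem _ hyB, hg'mem _ hxB, hg'mem _ hyB,
        show f1 * x + f1 * y = f1 * (x + y) from by ring,
        show g1 * x + g1 * y = g1 * (x + y) from by ring,
        ratio_simp h f1 g1 _ hxy0]
      exact htr1
    · have hwB : x + y + t0 ∈ B := by
        have : x + y + t0 = x + (y + t0) := by ring
        rw [this]; exact add_mem hxB hyT
      have key := hnew (x + y + t0) hwB
      rw [show x + y + t0 + t0 = x + y from by linear_combination t0 * h2] at key
      rw [hf'mem _ hxB, hf'nmem _ hyB, hg'mem _ hxB, hg'nmem _ hyB,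
        show f1 * x + (f1 * (y + t0) + a) = f1 * (x + y + t0) + a from by ring,
        show g1 * x + (g1 * (y + t0) + b) = g1 * (x + y + t0) + b from by ring]
      exact key
    · have hwB : x + y + t0 ∈ B := by
        have : x + y + t0 = y + (x + t0) := by ring
        rw [this]; exact add_mem hyB hxT
      have key := hnew (x + y + t0) hwB
      rw [show x + y + t0 + t0 = x + y from by linear_combination t0 * h2] at key
      rw [hf'nmem _ hxB, hf'mem _ hyB, hg'nmem _ hxB, hg'mem _ hyB,
        show f1 * (x + t0) + a + f1 * y = f1 * (x + y + t0) + a from by ring,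
        show g1 * (x + t0) + b + g1 * y = g1 * (x + y + t0) + b from by ring]
      exact key
    · rw [hf'nmem _ hxB, hf'nmem _ hyB, hg'nmem _ hxB, hg'nmem _ hyB,
        show f1 * (x + t0) + a + (f1 * (y + t0) + a) = f1 * (x + y) from by
          linear_combination (f1 * t0 + a) * h2,
        show g1 * (x + t0) + b + (g1 * (y + t0) + b) = g1 * (x + y) from by
          linear_combination (g1 * t0 + b) * h2,
        ratio_simp h f1 g1 _ hxy0]
      exact htr1
  refine ⟨f', g', ?_, hadd, htrace, ?_, ?_⟩
  · intro s hs
    exact ⟨hf'mem s hs, hf'T s hs, hg'mem s hs, hg'T s hs⟩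
  · -- uniqueness
    intro B'' f'' g'' hcard'' hadd'' _htr'' hold hnewpt
    have hsub : S ⊆ (B'' : Set (F h)) := by
      intro x hx
      rcases (memS x).1 hx with hxB | ⟨s, hs, rfl⟩
      · exact (hold x hxB).1
      · exact add_mem hnewpt.1 (hold s hs).1
    have hB''fin : (B'' : Set (F h)).Finite := by
      have : Finite B'' := Nat.finite_of_card_ne_zero (by omega)
      exact Set.toFinite _
    have hcardeq : (B'' : Set (F h)).ncard = 8 := by
      rw [← Nat.card_coe_set_eq]; exact hcard''
    have hSeq : S = (B'' : Set (F h)) :=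
      Set.eq_of_subset_of_ncard_le hsub (by rw [hScard, hcardeq]) hB''fin
    have hBeq : B'' = B' := SetLike.coe_injective hSeq.symm
    refine ⟨hBeq, ?_⟩
    intro x hx
    rcases hdec x hx with hxB | ⟨hxB, hxT⟩
    · rw [hf'mem _ hxB, hg'mem _ hxB]
      exact ⟨(hold x hxB).2.1, (hold x hxB).2.2⟩
    · have hxu : x = (x + t0) + t0 := by linear_combination -t0 * h2
      have huB'' : x + t0 ∈ B'' := (hold _ hxT).1
      have ht0B'' : t0 ∈ B'' := hnewpt.1
      constructor
      · rw [hxu, (hadd'' _ huB'' t0 ht0B'').1, (hold _ hxT).2.1, hnewpt.2.1,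
          hf'T _ hxT]
      · rw [hxu, (hadd'' _ huB'' t0 ht0B'').2, (hold _ hxT).2.2, hnewpt.2.2,
          hg'T _ hxT]
  · -- linearity
    rintro ⟨ha, hb⟩
    have hflin : ∀ x ∈ S, f' x = f1 * x ∧ g' x = g1 * x := by
      intro x hx
      rcases hdec x hx with hxB | ⟨hxB, _⟩
      · exact ⟨hf'mem _ hxB, hg'mem _ hxB⟩
      · rw [hf'nmem _ hxB, hg'nmem _ hxB, ha, hb]
        exact ⟨by linear_combination f1 * t0 * h2, by linear_combination g1 * t0 * h2⟩
    have hv : (![0, 1, f1, 0] : Fin 4 → F h) ≠ 0 := by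
      intro hc
      have := congrFun hc 1
      simp at this
    have hw : (![0, 0, g1, 1] : Fin 4 → F h) ≠ 0 := by
      intro hc
      have := congrFun hc 3
      simp at this
    refine ⟨Projectivization.mk (F h) ![0, 1, f1, 0] hv,
      Projectivization.mk (F h) ![0, 0, g1, 1] hw, ?_, ?_⟩
    · intro hPQ
      rw [Projectivization.mk_eq_mk_iff] at hPQ
      obtain ⟨c, hc⟩ := hPQ
      have := congrFun hc 1
      simp [Units.smul_def] at this
    · intro t ht
      obtain ⟨hft, hgt⟩ := hflin t ht
      constructor
      · have hrep : Projectivization.mk (F h)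
            (Projectivization.mk (F h) ![0, 1, f1, 0] hv).rep
            (Projectivization.rep_nonzero _) =
            Projectivization.mk (F h) ![0, 1, f1, 0] hv :=
          Projectivization.mk_rep _
        rw [Projectivization.mk_eq_mk_iff] at hrep
        obtain ⟨c, hc⟩ := hrep
        show (1 : F h) * _ + _ * _ + _ * _ + _ * _ = 0
        rw [hft, hgt, ← hc]
        simp only [Pi.smul_apply, Units.smul_def, smul_eq_mul]
        simp only [Matrix.cons_val_zero, Matrix.cons_val_one, Matrix.head_cons,
          Matrix.cons_val_two, Matrix.tail_cons, Matrix.cons_val_three]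
        linear_combination (f1 * t * (c : F h)) * h2
      · have hrep : Projectivization.mk (F h)
            (Projectivization.mk (F h) ![0, 0, g1, 1] hw).rep
            (Projectivization.rep_nonzero _) =
            Projectivization.mk (F h) ![0, 0, g1, 1] hw :=
          Projectivization.mk_rep _
        rw [Projectivization.mk_eq_mk_iff] at hrep
        obtain ⟨c, hc⟩ := hrep
        show (1 : F h) * _ + _ * _ + _ * _ + _ * _ = 0
        rw [hft, hgt, ← hc]
        simp only [Pi.smul_apply, Units.smul_def, smul_eq_mul]
        simp only [Matrix.cons_val_zero, Matrix.cons_val_one, Matrix.head_cons,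
          Matrix.cons_val_two, Matrix.tail_cons, Matrix.cons_val_three]
        linear_combination (g1 * t * (c : F h)) * h2
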